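/- arXiv:2304.13065 — 2 statements merged into one kernel-verified Lean document; each statement's English description precedes it below -/
import Mathlib

section
/- If (S, ≤) is a well-quasi ordering, then the set of finite multisets over S ordered by multiset embedding (M₁ ⊑ M₂ iff there is an injection h from M₁ into M₂ with s ≤ h(s) for all s ∈ M₁) is a well-quasi ordering. -/
def IsWqo {S : Type*} (le : S → S → Prop) : Prop :=
  Reflexive le ∧ Transitive le ∧ ∀ f : ℕ → S, ∃ i j, i < j ∧ le (f i) (f j)

/-- Multiset embedding: `M₁` embeds into `M₂` iff there is a submultiset `M₂'`
of `M₂` that is matched elementwise (injectively) with `M₁` via `le`. -/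
def MultisetEmb {S : Type*} (le : S → S → Prop) (M₁ M₂ : Multiset S) : Prop :=
  ∃ M₂' : Multiset S, M₂' ≤ M₂ ∧ Multiset.Rel le M₁ M₂'

/-! Higman's lemma makes lists over a wqo a wqo under `List.SublistForall₂`; forgetting the
order of a list turns such a relation into a multiset embedding, and every multiset is a list
up to order. -/

section

variable {S : Type*} {le : S → S → Prop}

namespace Multiset

theorem rel_coe_of_forall₂ {l₁ l₂ : List S} (h : List.Forall₂ le l₁ l₂) :
    Rel le (l₁ : Multiset S) l₂ := by
  induction h with
  | nil => exact Rel.zero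
  | cons hab _ ih => simpa using ih.cons hab

theorem exists_le_rel_of_le_of_rel {A B C : Multiset S} (hAB : A ≤ B) (hBC : Rel le B C) :
    ∃ C' ≤ C, Rel le A C' := by
  obtain ⟨D, rfl⟩ := le_iff_exists_add.mp hAB
  obtain ⟨C₁, C₂, hAC₁, -, rfl⟩ := rel_add_left.mp hBC
  exact ⟨C₁, le_add_right _ _, hAC₁⟩

end Multiset

namespace MultisetEmb

theorem refl [Std.Refl le] (M : Multiset S) : MultisetEmb le M M :=
  ⟨M, le_rfl, Multiset.rel_refl_of_refl_on fun x _ => refl_of le x⟩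

theorem trans [IsTrans S le] {A B C : Multiset S} :
    MultisetEmb le A B → MultisetEmb le B C → MultisetEmb le A C := by
  rintro ⟨B', hB'B, hAB'⟩ ⟨C', hC'C, hBC'⟩
  obtain ⟨C'', hC''C', hB'C''⟩ := Multiset.exists_le_rel_of_le_of_rel hB'B hBC'
  exact ⟨C'', hC''C'.trans hC'C, hAB'.trans le hB'C''⟩

theorem of_sublistForall₂ {l₁ l₂ : List S} (h : List.SublistForall₂ le l₁ l₂) :
    MultisetEmb le l₁ l₂ := by
  obtain ⟨l, hl₁l, hll₂⟩ := List.sublistForall₂_iff.mp h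
  exact ⟨l, Multiset.coe_le.mpr hll₂.subperm, Multiset.rel_coe_of_forall₂ hl₁l⟩

end MultisetEmb

theorem WellQuasiOrdered.sublistForall₂ [IsPreorder S le] (h : WellQuasiOrdered le) :
    WellQuasiOrdered (List.SublistForall₂ le) := by
  rw [← Set.partiallyWellOrderedOn_univ_iff] at h ⊢
  simpa using h.partiallyWellOrderedOn_sublistForall₂ le

theorem WellQuasiOrdered.multisetEmb [IsPreorder S le] (h : WellQuasiOrdered le) :
    WellQuasiOrdered (MultisetEmb le) :=
  h.sublistForall₂.of_surjective ⟨((↑) : List S → Multiset S), MultisetEmb.of_sublistForall₂⟩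
    Quot.mk_surjective

end

/-- If `(S, le)` is a wqo then finite multisets over `S` ordered by multiset
embedding form a wqo. -/
theorem multiset_emb_isWqo {S : Type*} (le : S → S → Prop) (hwqo : IsWqo le) :
    IsWqo (MultisetEmb le) := by
  obtain ⟨hrefl, htrans, hwqo⟩ := hwqo
  have : IsPreorder S le := { refl := hrefl, trans := @htrans }
  exact ⟨MultisetEmb.refl, fun _ _ _ => MultisetEmb.trans, WellQuasiOrdered.multisetEmb hwqo⟩
end

section
/- Soundness of the saturation algorithm (Lemma 1, base case structure): let P' be P with all receive transitions removed. If a configuration s is reachable in P' from an initial configuration, then s is coverable in RBN(P). More generally, for the sequence of processes P'₀ ⊆ P'₁ ⊆ … constructed by the algorithm (P'ᵢ adds all receive transitions ??a for letters a such that some configuration enabling !!a is coverable in P'ᵢ₋₁), any configuration reachable in some P'ᵢ is coverable in RBN(P). -/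
/-- A broadcast transition on a fixed graph `(V, E)`. -/
def Broadcast {S A V : Type*} (Rb Rr : S → A → S → Prop)
    (E : V → V → Prop) (L L' : V → S) (a : A) : Prop :=
  ∃ v, Rb (L v) a (L' v) ∧
    (∀ u, E v u → Rr (L u) a (L' u)) ∧
    (∀ w, w ≠ v → ¬ E v w → L' w = L w)

/-- One step of a reconfigurable broadcast network. -/
def RBNStep {S A V : Type*} (Rb Rr : S → A → S → Prop)
    (c c' : (V → V → Prop) × (V → S)) : Prop :=
  (c'.1 = c.1 ∧ ∃ a, Broadcast Rb Rr c.1 c.2 c'.2 a) ∨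
  (c'.2 = c.2 ∧ (∀ v, ¬ c'.1 v v) ∧ (∀ u v, c'.1 u v → c'.1 v u))

/-- Coverability of `s` in the reconfigurable broadcast network `RBN(P)`. -/
def RBNCoverable {S A : Type*} (Rb Rr : S → A → S → Prop) (S₀ : Set S)
    (le : S → S → Prop) (s : S) : Prop :=
  ∃ (n : ℕ) (E₀ : Fin n → Fin n → Prop) (L₀ : Fin n → S)
    (E : Fin n → Fin n → Prop) (L : Fin n → S),
    (∀ v, ¬ E₀ v v) ∧ (∀ u v, E₀ u v → E₀ v u) ∧
    (∀ v, L₀ v ∈ S₀) ∧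
    Relation.ReflTransGen (RBNStep Rb Rr) (E₀, L₀) (E, L) ∧
    ∃ v, le s (L v)

/-- One step of the process `P'` in which all broadcast transitions are kept
and only the receive transitions with letters in `T` are kept. -/
def stepT {S A : Type*} (Rb Rr : S → A → S → Prop) (T : Set A)
    (s s' : S) : Prop :=
  (∃ a, Rb s a s') ∨ (∃ a ∈ T, Rr s a s')

/-- Reachability from an initial configuration in the process `P'` with
receive letters restricted to `T`. -/
def ReachT {S A : Type*} (Rb Rr : S → A → S → Prop) (S₀ : Set S)
    (T : Set A) (s : S) : Prop :=
  ∃ s₀ ∈ S₀, Relation.ReflTransGen (stepT Rb Rr T) s₀ s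

/-- Coverability in the process `P'` with receive letters restricted to `T`. -/
def CovT {S A : Type*} (Rb Rr : S → A → S → Prop) (S₀ : Set S)
    (le : S → S → Prop) (T : Set A) (s : S) : Prop :=
  ∃ s', le s s' ∧ ReachT Rb Rr S₀ T s'

/-- The saturation sequence of the algorithm: `P'₀` has no receive
transitions; `P'ᵢ₊₁` additionally allows receiving every letter `a` such that
some configuration enabling a `!!a`-broadcast is coverable in `P'ᵢ`. -/
def Tseq {S A : Type*} (Rb Rr : S → A → S → Prop) (S₀ : Set S)
    (le : S → S → Prop) : ℕ → Set A
  | 0 => ∅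
  | i + 1 => Tseq Rb Rr S₀ le i ∪
      {a | ∃ c c', Rb c a c' ∧ CovT Rb Rr S₀ le (Tseq Rb Rr S₀ le i) c}

/-- The saturated (fixed-point) set of receive letters. -/
def Tw {S A : Type*} (Rb Rr : S → A → S → Prop) (S₀ : Set S)
    (le : S → S → Prop) : Set A :=
  ⋃ i, Tseq Rb Rr S₀ le i

/-- A broadcast on some communication graph. Since an RBN may reconfigure its graph arbitrarily
between two broadcasts, its runs are, up to the graphs, runs of this relation on labellings. -/
def LabelStep {S A V : Type*} (Rb Rr : S → A → S → Prop) (L L' : V → S) : Prop :=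
  ∃ E : V → V → Prop, (∀ v, ¬ E v v) ∧ (∀ u v, E u v → E v u) ∧
    ∃ a, Broadcast Rb Rr E L L' a

def LabelCoverable {S A : Type*} (Rb Rr : S → A → S → Prop) (S₀ : Set S)
    (le : S → S → Prop) (s : S) : Prop :=
  ∃ (n : ℕ) (L₀ L : Fin n → S), (∀ v, L₀ v ∈ S₀) ∧
    Relation.ReflTransGen (LabelStep Rb Rr) L₀ L ∧ ∃ v, le s (L v)

def UpwardCompatible {S A : Type*} (le : S → S → Prop) (R : S → A → S → Prop) : Prop :=
  ∀ s₁ t₁ a s₂, le s₁ t₁ → R s₁ a s₂ → ∃ t₂, le s₂ t₂ ∧ R t₁ a t₂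

open Function Relation

section

variable {S A : Type*} {Rb Rr : S → A → S → Prop} {S₀ : Set S} {le : S → S → Prop}

theorem labelStep_update_single {V : Type*} [DecidableEq V] {L : V → S} {u : V} {a : A} {x : S}
    (hb : Rb (L u) a x) : LabelStep Rb Rr L (update L u x) :=
  ⟨fun _ _ => False, fun _ h => h, fun _ _ h => h, a, u, by simpa using hb,
    fun _ h => h.elim, fun _ hw _ => update_of_ne hw _ _⟩

theorem labelStep_update_pair {V : Type*} [DecidableEq V] {L : V → S} {u v : V} (huv : u ≠ v)
    {a : A} {x y : S} (hb : Rb (L u) a x) (hr : Rr (L v) a y) :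
    LabelStep Rb Rr L (update (update L v y) u x) := by
  refine ⟨fun p q => p = u ∧ q = v ∨ p = v ∧ q = u, ?_, ?_, a, u, by simpa using hb, ?_, ?_⟩
  · rintro w (⟨rfl, rfl⟩ | ⟨rfl, rfl⟩) <;> exact huv rfl
  · rintro p q (⟨rfl, rfl⟩ | ⟨rfl, rfl⟩) <;> simp
  · rintro w (⟨-, rfl⟩ | ⟨h, -⟩)
    · simpa [huv.symm] using hr
    · exact absurd h huv
  · intro w hwu hwv
    have hwv : w ≠ v := fun h => hwv (Or.inl ⟨rfl, h⟩)
    rw [update_of_ne hwu, update_of_ne hwv]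

theorem LabelStep.map {V W : Type*} {f : V → W} (hf : Injective f) {L L' : V → S} {M M' : W → S}
    (h : LabelStep Rb Rr L L') (hM : ∀ v, M (f v) = L v) (hM' : ∀ v, M' (f v) = L' v)
    (hidle : ∀ w, w ∉ Set.range f → M' w = M w) : LabelStep Rb Rr M M' := by
  obtain ⟨E, hirr, hsymm, a, v, hb, hrecv, hrest⟩ := h
  refine ⟨Relation.Map E f f, ?_, ?_, a, f v, by rwa [hM, hM'], ?_, ?_⟩
  · rintro _ ⟨x, y, hxy, rfl, hyx⟩
    exact hirr x (hf hyx ▸ hxy)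
  · rintro _ _ ⟨x, y, hxy, rfl, rfl⟩
    exact ⟨y, x, hsymm x y hxy, rfl, rfl⟩
  · rintro _ ⟨x, y, hxy, hx, rfl⟩
    rw [hM, hM']
    exact hrecv y (hf hx ▸ hxy)
  · intro w hwv hnE
    by_cases hw : w ∈ Set.range f
    · obtain ⟨y, rfl⟩ := hw
      rw [hM, hM']
      exact hrest y (fun h => hwv (h ▸ rfl)) (fun hvy => hnE ⟨v, y, hvy, rfl, rfl⟩)
    · exact hidle w hw

theorem Relation.ReflTransGen.labelStep_append {n m : ℕ} {L₀ L : Fin n → S} {M₀ M : Fin m → S}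
    (hL : ReflTransGen (LabelStep Rb Rr) L₀ L) (hM : ReflTransGen (LabelStep Rb Rr) M₀ M) :
    ReflTransGen (LabelStep Rb Rr) (Fin.append L₀ M₀) (Fin.append L M) := by
  have hleft : ReflTransGen (LabelStep Rb Rr) (Fin.append L₀ M₀) (Fin.append L M₀) :=
    hL.lift (fun L => Fin.append L M₀) fun _ _ h =>
      h.map (Fin.castAdd_injective n m) (Fin.append_left _ _) (Fin.append_left _ _) fun w hw => by
        cases w using Fin.addCases with
        | left i => exact absurd ⟨i, rfl⟩ hw
        | right j => simp only [Fin.append_right]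
  have hright : ReflTransGen (LabelStep Rb Rr) (Fin.append L M₀) (Fin.append L M) :=
    hM.lift (fun M => Fin.append L M) fun _ _ h =>
      h.map (Fin.natAdd_injective m n) (Fin.append_right _ _) (Fin.append_right _ _) fun w hw => by
        cases w using Fin.addCases with
        | left i => simp only [Fin.append_left]
        | right j => exact absurd ⟨j, rfl⟩ hw
  exact hleft.trans hright

theorem Relation.ReflTransGen.rbnStep_of_labelStep {V : Type*} {L₀ L : V → S}
    (h : ReflTransGen (LabelStep Rb Rr) L₀ L) {E₀ : V → V → Prop} :
    ∃ E, ReflTransGen (RBNStep Rb Rr) (E₀, L₀) (E, L) := by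
  induction h with
  | refl => exact ⟨E₀, .refl⟩
  | @tail L L' _ hstep ih =>
    obtain ⟨E, hrun⟩ := ih
    obtain ⟨E', hirr, hsymm, a, hbr⟩ := hstep
    have hreconf : RBNStep Rb Rr (E, L) (E', L) := .inr ⟨rfl, hirr, hsymm⟩
    exact ⟨E', (hrun.tail hreconf).tail (.inl ⟨rfl, a, hbr⟩)⟩

theorem LabelCoverable.rbnCoverable {s : S} (h : LabelCoverable Rb Rr S₀ le s) :
    RBNCoverable Rb Rr S₀ le s := by
  obtain ⟨n, L₀, L, hinit, hrun, hcov⟩ := h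
  obtain ⟨E, hrun'⟩ := hrun.rbnStep_of_labelStep (E₀ := fun _ _ => False)
  exact ⟨n, _, L₀, E, L, fun _ h => h, fun _ _ h => h, hinit, hrun', hcov⟩

theorem labelCoverable_of_mem (hrefl : ∀ s, le s s) {s : S} (hs : s ∈ S₀) :
    LabelCoverable Rb Rr S₀ le s :=
  ⟨1, fun _ => s, fun _ => s, fun _ => hs, .refl, 0, hrefl s⟩

theorem LabelCoverable.of_le (htrans : ∀ ⦃s t u⦄, le s t → le t u → le s u) {s t : S}
    (ht : LabelCoverable Rb Rr S₀ le t) (hst : le s t) : LabelCoverable Rb Rr S₀ le s := by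
  obtain ⟨n, L₀, L, hinit, hrun, v, hv⟩ := ht
  exact ⟨n, L₀, L, hinit, hrun, v, htrans hst hv⟩

theorem LabelCoverable.broadcast
    (compatB : UpwardCompatible le Rb)
    {s t : S} {a : A} (hs : LabelCoverable Rb Rr S₀ le s) (hb : Rb s a t) :
    LabelCoverable Rb Rr S₀ le t := by
  obtain ⟨n, L₀, L, hinit, hrun, v, hv⟩ := hs
  obtain ⟨t', htt', hb'⟩ := compatB s (L v) a t hv hb
  exact ⟨n, L₀, update L v t', hinit, hrun.tail (labelStep_update_single hb'), v,
    by rwa [update_self]⟩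

theorem LabelCoverable.receive
    (compatB : UpwardCompatible le Rb) (compatR : UpwardCompatible le Rr)
    {s t p p' : S} {a : A} (hs : LabelCoverable Rb Rr S₀ le s) (hr : Rr s a t)
    (hp : LabelCoverable Rb Rr S₀ le p) (hb : Rb p a p') :
    LabelCoverable Rb Rr S₀ le t := by
  obtain ⟨n, L₀, L, hinitL, hrunL, v, hv⟩ := hs
  obtain ⟨m, M₀, M, hinitM, hrunM, u, hu⟩ := hp
  obtain ⟨t', htt', hr'⟩ := compatR s (L v) a t hv hr
  obtain ⟨p'', -, hb'⟩ := compatB p (M u) a p' hu hb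
  have hne : Fin.natAdd n u ≠ Fin.castAdd m v := by
    simp only [ne_eq, Fin.ext_iff, Fin.val_natAdd, Fin.val_castAdd]
    omega
  have hinit : ∀ w, Fin.append L₀ M₀ w ∈ S₀ := fun w => by
    cases w using Fin.addCases with
    | left i => simpa using hinitL i
    | right j => simpa using hinitM j
  have hstep : LabelStep Rb Rr (Fin.append L M)
      (update (update (Fin.append L M) (Fin.castAdd m v) t') (Fin.natAdd n u) p'') :=
    labelStep_update_pair hne (by simpa using hb') (by simpa using hr')
  refine ⟨n + m, _, _, hinit, (hrunL.labelStep_append hrunM).tail hstep, Fin.castAdd m v, ?_⟩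
  rwa [update_of_ne hne.symm, update_self]

theorem labelCoverable_of_reachT (hrefl : ∀ s, le s s)
    (compatB : UpwardCompatible le Rb) (compatR : UpwardCompatible le Rr)
    {T : Set A} (hT : ∀ a ∈ T, ∃ c c', Rb c a c' ∧ LabelCoverable Rb Rr S₀ le c)
    {s : S} (h : ReachT Rb Rr S₀ T s) : LabelCoverable Rb Rr S₀ le s := by
  obtain ⟨s₀, hs₀, hrun⟩ := h
  induction hrun with
  | refl => exact labelCoverable_of_mem hrefl hs₀
  | tail _ hstep ih =>
    rcases hstep with ⟨a, hb⟩ | ⟨a, ha, hr⟩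
    · exact ih.broadcast compatB hb
    · obtain ⟨c, c', hb, hc⟩ := hT a ha
      exact ih.receive compatB compatR hr hc hb

theorem exists_broadcast_labelCoverable_of_mem_Tseq (hrefl : ∀ s, le s s)
    (htrans : ∀ ⦃s t u⦄, le s t → le t u → le s u)
    (compatB : UpwardCompatible le Rb) (compatR : UpwardCompatible le Rr) (i : ℕ) :
    ∀ a ∈ Tseq Rb Rr S₀ le i, ∃ c c', Rb c a c' ∧ LabelCoverable Rb Rr S₀ le c := by
  induction i with
  | zero => simp [Tseq]
  | succ i ih =>
    rintro a (ha | ⟨c, c', hb, s, hcs, hs⟩)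
    · exact ih a ha
    · exact ⟨c, c', hb, (labelCoverable_of_reachT hrefl compatB compatR ih hs).of_le htrans hcs⟩

end

/-- Soundness of the saturation algorithm (Lemma 1): any configuration
reachable in some process `P'ᵢ` of the saturation sequence is coverable in the
reconfigurable broadcast network `RBN(P)`. -/
theorem saturation_sound {S A : Type*} (le : S → S → Prop)
    (Rb Rr : S → A → S → Prop) (S₀ : Set S)
    (hwqo : IsWqo le)
    (compatB : ∀ s₁ t₁ a s₂, le s₁ t₁ → Rb s₁ a s₂ →
        ∃ t₂, le s₂ t₂ ∧ Rb t₁ a t₂)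
    (compatR : ∀ s₁ t₁ a s₂, le s₁ t₁ → Rr s₁ a s₂ →
        ∃ t₂, le s₂ t₂ ∧ Rr t₁ a t₂)
    (i : ℕ) (s : S)
    (hreach : ReachT Rb Rr S₀ (Tseq Rb Rr S₀ le i) s) :
    RBNCoverable Rb Rr S₀ le s := by
  obtain ⟨hrefl, htrans, -⟩ := hwqo
  exact (labelCoverable_of_reachT hrefl compatB compatR
    (exists_broadcast_labelCoverable_of_mem_Tseq hrefl htrans compatB compatR i) hreach).rbnCoverable
end
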